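/- Under the same hypotheses, for every ε ∈ (0,1): ‖u_{x_i}‖_{C([0,T]×H̄)} ≤ ε ‖u‖_{C^{2+α}_s([0,T]×H̄)} + C ε^{-m} ‖u‖_{C([0,T]×H̄)} for each 1 ≤ i ≤ d, where m = m(d,α) and C = C(T,R,d,α). -/

import Mathlib

/-- The cycloidal distance. -/
noncomputable def cyc (d : ℕ) (P Q : ℝ × (Fin (d + 1) → ℝ)) : ℝ :=
  (∑ i, |P.2 i - Q.2 i|) /
      (Real.sqrt (P.2 (Fin.last d)) + Real.sqrt (Q.2 (Fin.last d)) +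
        Real.sqrt (∑ i : Fin d, |P.2 i.castSucc - Q.2 i.castSucc|)) +
    Real.sqrt |P.1 - Q.1|

/-- The closed space-time domain `[0,T] × H̄`. -/
def domT (d : ℕ) (T : ℝ) : Set (ℝ × (Fin (d + 1) → ℝ)) :=
  {P | P.1 ∈ Set.Icc 0 T ∧ 0 ≤ P.2 (Fin.last d)}

/-- Sup norm of `f` over a set `S`. -/
noncomputable def supN (d : ℕ) (S : Set (ℝ × (Fin (d + 1) → ℝ)))
    (f : ℝ × (Fin (d + 1) → ℝ) → ℝ) : ℝ :=
  sSup ((fun P => |f P|) '' S)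

/-- Cycloidal Hölder seminorm of exponent `α` of `f` over a set `S`. -/
noncomputable def semiS (d : ℕ) (α : ℝ) (S : Set (ℝ × (Fin (d + 1) → ℝ)))
    (f : ℝ × (Fin (d + 1) → ℝ) → ℝ) : ℝ :=
  sSup ((fun PQ : (ℝ × (Fin (d + 1) → ℝ)) × (ℝ × (Fin (d + 1) → ℝ)) =>
    |f PQ.1 - f PQ.2| / (cyc d PQ.1 PQ.2) ^ α) '' (S ×ˢ S))

/-- Cycloidal Hölder norm `‖f‖_{C^α_s(S)}`. -/
noncomputable def holderS (d : ℕ) (α : ℝ) (S : Set (ℝ × (Fin (d + 1) → ℝ)))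
    (f : ℝ × (Fin (d + 1) → ℝ) → ℝ) : ℝ :=
  supN d S f + semiS d α S f

/-- The Daskalopoulos–Hamilton–Koch norm `‖u‖_{C^{2+α}_s(S)}`, expressed in terms
of `u`, its time derivative `ut`, spatial first derivatives `ux i`, and spatial
second derivatives `uxx i j`. -/
noncomputable def norm2S (d : ℕ) (α : ℝ) (S : Set (ℝ × (Fin (d + 1) → ℝ)))
    (u ut : ℝ × (Fin (d + 1) → ℝ) → ℝ)
    (ux : Fin (d + 1) → ℝ × (Fin (d + 1) → ℝ) → ℝ)
    (uxx : Fin (d + 1) → Fin (d + 1) → ℝ × (Fin (d + 1) → ℝ) → ℝ) : ℝ :=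
  holderS d α S u + holderS d α S ut + (⨆ i, holderS d α S (ux i)) +
    ⨆ i, ⨆ j, holderS d α S (fun P => P.2 (Fin.last d) * uxx i j P)

/-- Finiteness (boundedness) of all the quantities entering `norm2S`. -/
def FinNorm2 (d : ℕ) (α : ℝ) (S : Set (ℝ × (Fin (d + 1) → ℝ)))
    (u ut : ℝ × (Fin (d + 1) → ℝ) → ℝ)
    (ux : Fin (d + 1) → ℝ × (Fin (d + 1) → ℝ) → ℝ)
    (uxx : Fin (d + 1) → Fin (d + 1) → ℝ × (Fin (d + 1) → ℝ) → ℝ) : Prop :=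
  (BddAbove ((fun P => |u P|) '' S) ∧
    BddAbove ((fun PQ : (ℝ × (Fin (d + 1) → ℝ)) × (ℝ × (Fin (d + 1) → ℝ)) =>
      |u PQ.1 - u PQ.2| / (cyc d PQ.1 PQ.2) ^ α) '' (S ×ˢ S))) ∧
  (BddAbove ((fun P => |ut P|) '' S) ∧
    BddAbove ((fun PQ : (ℝ × (Fin (d + 1) → ℝ)) × (ℝ × (Fin (d + 1) → ℝ)) =>
      |ut PQ.1 - ut PQ.2| / (cyc d PQ.1 PQ.2) ^ α) '' (S ×ˢ S))) ∧
  (∀ i, BddAbove ((fun P => |ux i P|) '' S) ∧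
    BddAbove ((fun PQ : (ℝ × (Fin (d + 1) → ℝ)) × (ℝ × (Fin (d + 1) → ℝ)) =>
      |ux i PQ.1 - ux i PQ.2| / (cyc d PQ.1 PQ.2) ^ α) '' (S ×ˢ S))) ∧
  (∀ i j, BddAbove ((fun P => |P.2 (Fin.last d) * uxx i j P|) '' S) ∧
    BddAbove ((fun PQ : (ℝ × (Fin (d + 1) → ℝ)) × (ℝ × (Fin (d + 1) → ℝ)) =>
      |PQ.1.2 (Fin.last d) * uxx i j PQ.1 - PQ.2.2 (Fin.last d) * uxx i j PQ.2| /
        (cyc d PQ.1 PQ.2) ^ α) '' (S ×ˢ S)))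

/-- `ut`, `ux`, `uxx` really are the (one-sided, within the domain) time
derivative, first and second spatial partial derivatives of `u` on `[0,T] × H̄`. -/
def IsDerivs (d : ℕ) (T : ℝ) (u ut : ℝ × (Fin (d + 1) → ℝ) → ℝ)
    (ux : Fin (d + 1) → ℝ × (Fin (d + 1) → ℝ) → ℝ)
    (uxx : Fin (d + 1) → Fin (d + 1) → ℝ × (Fin (d + 1) → ℝ) → ℝ) : Prop :=
  (∀ P ∈ domT d T, HasDerivWithinAt (fun τ => u (τ, P.2)) (ut P) (Set.Icc 0 T) P.1) ∧
  (∀ P ∈ domT d T, ∀ i, HasDerivWithinAt (fun s => u (P.1, Function.update P.2 i s))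
      (ux i P) {s : ℝ | 0 ≤ Function.update P.2 i s (Fin.last d)} (P.2 i)) ∧
  (∀ P ∈ domT d T, ∀ i j, HasDerivWithinAt (fun s => ux i (P.1, Function.update P.2 j s))
      (uxx i j P) {s : ℝ | 0 ≤ Function.update P.2 j s (Fin.last d)} (P.2 j))

/-- `u` has (spatial) compact support in the closed Euclidean ball `B̄_R(x⁰)`. -/
def SuppBall (d : ℕ) (R : ℝ) (x0 : Fin (d + 1) → ℝ)
    (u : ℝ × (Fin (d + 1) → ℝ) → ℝ) : Prop :=
  ∀ P : ℝ × (Fin (d + 1) → ℝ), R < Real.sqrt (∑ i, (P.2 i - x0 i) ^ 2) → u P = 0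

/-!
Fix a point and move a distance `h` in the direction `x_i`, into the half-space. By the mean
value theorem, `h · u_{x_i}` differs from the increment of `u` by at most `h` times the
oscillation of `u_{x_i}` along the segment. Over such a segment the cycloidal distance is at most
`√h`, so that oscillation is at most `[u_{x_i}]_{C^α_s} · h^{α/2}`, and
`|u_{x_i}| ≤ [u_{x_i}]_{C^α_s} h^{α/2} + 2 ‖u‖_C / h`. Taking `h = ε^{2/α}` gives the estimate
with `m = 2/α` and `C = 2`.
-/

open Real Set Function

theorem abs_deriv_le_of_abs_sub_deriv_le {g g' : ℝ → ℝ} {a h M N : ℝ} (hh : 0 < h)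
    (hg : ∀ y ∈ Icc a (a + h), HasDerivWithinAt g (g' y) (Icc a (a + h)) y)
    (hosc : ∀ y ∈ Icc a (a + h), |g' y - g' a| ≤ M)
    (ha : |g a| ≤ N) (hah : |g (a + h)| ≤ N) :
    |g' a| ≤ M + 2 * N / h := by
  -- Mean value theorem for `g s - s * g' a`, whose derivative is `g' s - g' a`.
  have hmvt : |g (a + h) - (a + h) * g' a - (g a - a * g' a)| ≤ M * h := by
    have := (convex_Icc a (a + h)).norm_image_sub_le_of_norm_hasDerivWithin_le
      (f := fun s => g s - s * g' a)
      (fun y hy => (hg y hy).sub (hasDerivAt_mul_const (g' a)).hasDerivWithinAt) hosc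
      (left_mem_Icc.2 (by linarith)) (right_mem_Icc.2 (by linarith))
    simpa [Real.norm_eq_abs, abs_of_pos hh] using this
  have hmul : h * |g' a| ≤ M * h + 2 * N := by
    rw [abs_le] at hmvt ha hah
    cases abs_cases (g' a) <;> nlinarith
  calc |g' a| = h * |g' a| / h := by field_simp
    _ ≤ (M * h + 2 * N) / h := by gcongr
    _ = M + 2 * N / h := by field_simp

theorem sqrt_abs_sub_le_sqrt_add_sqrt {a b : ℝ} (ha : 0 ≤ a) (hb : 0 ≤ b) :
    √|a - b| ≤ √a + √b := by
  rcases le_total a b with hab | hab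
  · have : √|a - b| ≤ √b := sqrt_le_sqrt (by rw [abs_of_nonpos (by linarith)]; linarith)
    linarith [sqrt_nonneg a]
  · have : √|a - b| ≤ √a := sqrt_le_sqrt (by rw [abs_of_nonneg (by linarith)]; linarith)
    linarith [sqrt_nonneg b]

theorem div_le_sqrt_of_sqrt_le {a D : ℝ} (ha : 0 ≤ a) (hD : √a ≤ D) : a / D ≤ √a := by
  rcases (sqrt_nonneg a).trans hD |>.eq_or_lt with h0 | hpos
  · rw [← h0, div_zero]
    exact sqrt_nonneg a
  · rw [div_le_iff₀ hpos]
    calc a = √a * √a := (mul_self_sqrt ha).symm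
      _ ≤ √a * D := by gcongr

section Cycloidal

variable {d : ℕ}

theorem cyc_nonneg (P Q : ℝ × (Fin (d + 1) → ℝ)) : 0 ≤ cyc d P Q := by
  unfold cyc
  positivity

theorem sqrt_abs_sub_le_cyc_denom {x y : Fin (d + 1) → ℝ} (hx : 0 ≤ x (Fin.last d))
    (hy : 0 ≤ y (Fin.last d)) (i : Fin (d + 1)) :
    √|x i - y i| ≤ √(x (Fin.last d)) + √(y (Fin.last d)) +
      √(∑ k : Fin d, |x k.castSucc - y k.castSucc|) := by
  induction i using Fin.lastCases with
  | last =>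
    linarith [sqrt_abs_sub_le_sqrt_add_sqrt hx hy,
      sqrt_nonneg (∑ k : Fin d, |x k.castSucc - y k.castSucc|)]
  | cast k =>
    have : √|x k.castSucc - y k.castSucc| ≤ √(∑ k : Fin d, |x k.castSucc - y k.castSucc|) :=
      sqrt_le_sqrt (Finset.single_le_sum (f := fun k : Fin d => |x k.castSucc - y k.castSucc|)
        (fun j _ => abs_nonneg _) (Finset.mem_univ k))
    linarith [sqrt_nonneg (x (Fin.last d)), sqrt_nonneg (y (Fin.last d))]

theorem cyc_update_eq (t : ℝ) (x : Fin (d + 1) → ℝ) (i : Fin (d + 1)) (s : ℝ) :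
    cyc d (t, update x i s) (t, x) =
      |s - x i| / (√(update x i s (Fin.last d)) + √(x (Fin.last d)) +
        √(∑ k : Fin d, |update x i s k.castSucc - x k.castSucc|)) := by
  have hsum : ∑ j, |update x i s j - x j| = |s - x i| := by
    rw [Finset.sum_eq_single i (fun j _ hj => by simp [update_of_ne hj]) (by simp)]
    simp
  simp [cyc, hsum]

theorem cyc_update_le_sqrt {x : Fin (d + 1) → ℝ} {i : Fin (d + 1)} {s : ℝ} (t : ℝ)
    (hx : 0 ≤ x (Fin.last d)) (hs : 0 ≤ update x i s (Fin.last d)) :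
    cyc d (t, update x i s) (t, x) ≤ √|s - x i| := by
  rw [cyc_update_eq]
  refine div_le_sqrt_of_sqrt_le (abs_nonneg _) ?_
  simpa using sqrt_abs_sub_le_cyc_denom hs hx i

theorem cyc_update_pos {x : Fin (d + 1) → ℝ} {i : Fin (d + 1)} {s : ℝ} (t : ℝ)
    (hx : 0 ≤ x (Fin.last d)) (hs : 0 ≤ update x i s (Fin.last d)) (hne : s ≠ x i) :
    0 < cyc d (t, update x i s) (t, x) := by
  have hpos : 0 < |s - x i| := abs_pos.2 (sub_ne_zero.2 hne)
  rw [cyc_update_eq]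
  refine div_pos hpos (lt_of_lt_of_le (sqrt_pos.2 hpos) ?_)
  simpa using sqrt_abs_sub_le_cyc_denom hs hx i

end Cycloidal

section Norms

variable {d : ℕ} {α : ℝ} {S : Set (ℝ × (Fin (d + 1) → ℝ))} {f : ℝ × (Fin (d + 1) → ℝ) → ℝ}

theorem supN_nonneg : 0 ≤ supN d S f :=
  sSup_nonneg <| forall_mem_image.2 fun _ _ => abs_nonneg _

theorem semiS_nonneg : 0 ≤ semiS d α S f :=
  sSup_nonneg <| forall_mem_image.2 fun _ _ =>
    div_nonneg (abs_nonneg _) (rpow_nonneg (cyc_nonneg _ _) _)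

theorem holderS_nonneg : 0 ≤ holderS d α S f :=
  add_nonneg supN_nonneg semiS_nonneg

theorem abs_le_supN (hb : BddAbove ((fun P => |f P|) '' S)) {P : ℝ × (Fin (d + 1) → ℝ)}
    (hP : P ∈ S) : |f P| ≤ supN d S f :=
  le_csSup hb ⟨P, hP, rfl⟩

theorem abs_sub_le_semiS_mul_rpow
    (hb : BddAbove ((fun PQ : (ℝ × (Fin (d + 1) → ℝ)) × (ℝ × (Fin (d + 1) → ℝ)) =>
      |f PQ.1 - f PQ.2| / (cyc d PQ.1 PQ.2) ^ α) '' (S ×ˢ S)))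
    {P Q : ℝ × (Fin (d + 1) → ℝ)} (hP : P ∈ S) (hQ : Q ∈ S) (hPQ : 0 < cyc d P Q) :
    |f P - f Q| ≤ semiS d α S f * cyc d P Q ^ α :=
  (div_le_iff₀ (rpow_pos_of_pos hPQ α)).1 (le_csSup hb ⟨(P, Q), ⟨hP, hQ⟩, rfl⟩)

theorem semiS_le_norm2S (u ut : ℝ × (Fin (d + 1) → ℝ) → ℝ)
    (ux : Fin (d + 1) → ℝ × (Fin (d + 1) → ℝ) → ℝ)
    (uxx : Fin (d + 1) → Fin (d + 1) → ℝ × (Fin (d + 1) → ℝ) → ℝ) (i : Fin (d + 1)) :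
    semiS d α S (ux i) ≤ norm2S d α S u ut ux uxx := by
  have hux : holderS d α S (ux i) ≤ ⨆ j, holderS d α S (ux j) :=
    le_ciSup (f := fun j => holderS d α S (ux j)) (finite_range _).bddAbove i
  have huxx : 0 ≤ ⨆ i, ⨆ j, holderS d α S (fun P => P.2 (Fin.last d) * uxx i j P) :=
    iSup_nonneg fun _ => iSup_nonneg fun _ => holderS_nonneg
  have hsemi : semiS d α S (ux i) ≤ holderS d α S (ux i) := le_add_of_nonneg_left supN_nonneg
  unfold norm2S
  linarith [holderS_nonneg (α := α) (S := S) (f := u), holderS_nonneg (α := α) (S := S) (f := ut)]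

end Norms

section Domain

variable {d : ℕ} {T : ℝ}

theorem update_last_nonneg {x : Fin (d + 1) → ℝ} (hx : 0 ≤ x (Fin.last d)) {i : Fin (d + 1)}
    {s : ℝ} (hs : x i ≤ s) : 0 ≤ update x i s (Fin.last d) := by
  rw [update_apply]
  split_ifs with h
  · subst h
    linarith
  · exact hx

theorem update_mem_domT {t : ℝ} {x : Fin (d + 1) → ℝ} (hP : (t, x) ∈ domT d T)
    {i : Fin (d + 1)} {s : ℝ} (hs : x i ≤ s) : (t, update x i s) ∈ domT d T :=
  ⟨hP.1, update_last_nonneg hP.2 hs⟩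

theorem abs_sub_update_le_semiS {α : ℝ} (hα : 0 ≤ α) {f : ℝ × (Fin (d + 1) → ℝ) → ℝ}
    (hb : BddAbove ((fun PQ : (ℝ × (Fin (d + 1) → ℝ)) × (ℝ × (Fin (d + 1) → ℝ)) =>
      |f PQ.1 - f PQ.2| / (cyc d PQ.1 PQ.2) ^ α) '' (domT d T ×ˢ domT d T)))
    {t : ℝ} {x : Fin (d + 1) → ℝ} (hP : (t, x) ∈ domT d T) {i : Fin (d + 1)} {s : ℝ}
    (hs : x i ≤ s) :
    |f (t, update x i s) - f (t, x)| ≤ semiS d α (domT d T) f * √(s - x i) ^ α := by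
  rcases hs.eq_or_lt with rfl | hlt
  · simp only [update_eq_self, sub_self, abs_zero]
    exact mul_nonneg semiS_nonneg (rpow_nonneg (sqrt_nonneg _) _)
  have hQ := update_mem_domT hP hs
  have hcyc := cyc_update_pos t hP.2 hQ.2 hlt.ne'
  calc |f (t, update x i s) - f (t, x)|
      ≤ semiS d α (domT d T) f * cyc d (t, update x i s) (t, x) ^ α :=
        abs_sub_le_semiS_mul_rpow hb hQ hP hcyc
    _ ≤ semiS d α (domT d T) f * √(s - x i) ^ α := by
        have hcyc_le := cyc_update_le_sqrt t hP.2 hQ.2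
        rw [abs_of_pos (sub_pos.2 hlt)] at hcyc_le
        gcongr
        exact semiS_nonneg

/-- The step `δ ^ 2` points in the positive `x_i` direction, so it stays in `H̄` even for
`i = Fin.last d`, and over it the cycloidal distance is at most `δ`. -/
theorem abs_ux_le_of_isDerivs {α : ℝ} (hα : 0 ≤ α) {u ut : ℝ × (Fin (d + 1) → ℝ) → ℝ}
    {ux : Fin (d + 1) → ℝ × (Fin (d + 1) → ℝ) → ℝ}
    {uxx : Fin (d + 1) → Fin (d + 1) → ℝ × (Fin (d + 1) → ℝ) → ℝ}
    (hder : IsDerivs d T u ut ux uxx) (hfin : FinNorm2 d α (domT d T) u ut ux uxx)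
    (i : Fin (d + 1)) {P : ℝ × (Fin (d + 1) → ℝ)} (hP : P ∈ domT d T) {δ : ℝ} (hδ : 0 < δ) :
    |ux i P| ≤ semiS d α (domT d T) (ux i) * δ ^ α + 2 * supN d (domT d T) u / δ ^ 2 := by
  obtain ⟨t, x⟩ := P
  have hstep : ∀ s ∈ Icc (x i) (x i + δ ^ 2), (t, update x i s) ∈ domT d T :=
    fun s hs => update_mem_domT hP hs.1
  have hle : x i ≤ x i + δ ^ 2 := le_add_of_nonneg_right (by positivity)
  have key := abs_deriv_le_of_abs_sub_deriv_le (g := fun s => u (t, update x i s))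
    (g' := fun s => ux i (t, update x i s)) (M := semiS d α (domT d T) (ux i) * δ ^ α)
    (pow_pos hδ 2)
    (fun s hs => by
      have := hder.2.1 _ (hstep s hs) i
      simp only [update_idem, update_self] at this
      exact this.mono fun r hr => (hstep r hr).2)
    (fun s hs => by
      simp only [update_eq_self]
      refine (abs_sub_update_le_semiS hα (hfin.2.2.1 i).2 hP hs.1).trans ?_
      gcongr
      · exact semiS_nonneg
      · rw [sqrt_le_left hδ.le]
        linarith [hs.2])
    (abs_le_supN hfin.1.1 (hstep _ (left_mem_Icc.2 hle)))
    (abs_le_supN hfin.1.1 (hstep _ (right_mem_Icc.2 hle)))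
  simpa only [update_eq_self] using key

end Domain

theorem interpolation_first_deriv_sup_general (d : ℕ) (α : ℝ)
    (hα : α ∈ Set.Ioo (0 : ℝ) 1) :
    ∃ m : ℝ, 0 < m ∧ ∀ T R : ℝ, 0 < T → 0 < R →
      ∃ C : ℝ, 0 < C ∧
        ∀ (u ut : ℝ × (Fin (d + 1) → ℝ) → ℝ)
          (ux : Fin (d + 1) → ℝ × (Fin (d + 1) → ℝ) → ℝ)
          (uxx : Fin (d + 1) → Fin (d + 1) → ℝ × (Fin (d + 1) → ℝ) → ℝ)
          (x0 : Fin (d + 1) → ℝ),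
          x0 (Fin.last d) = 0 →
          SuppBall d R x0 u →
          IsDerivs d T u ut ux uxx →
          FinNorm2 d α (domT d T) u ut ux uxx →
          ∀ ε ∈ Set.Ioo (0 : ℝ) 1, ∀ i : Fin (d + 1),
            supN d (domT d T) (ux i) ≤
              ε * norm2S d α (domT d T) u ut ux uxx +
                C * ε ^ (-m) * supN d (domT d T) u := by
  refine ⟨2 / α, div_pos two_pos hα.1, fun T R _ _ => ⟨2, two_pos, ?_⟩⟩
  intro u ut ux uxx x0 _ _ hder hfin ε hε i
  set δ := ε ^ α⁻¹
  have hδ : 0 < δ := rpow_pos_of_pos hε.1 _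
  have hδα : δ ^ α = ε := by
    rw [← rpow_mul hε.1.le, inv_mul_cancel₀ hα.1.ne', rpow_one]
  have hδ2 : 2 / δ ^ 2 = 2 * ε ^ (-(2 / α)) := by
    rw [← rpow_natCast, ← rpow_mul hε.1.le, rpow_neg hε.1.le, div_eq_mul_inv]
    norm_num [div_eq_inv_mul]
  have hsemi := semiS_le_norm2S (α := α) (S := domT d T) u ut ux uxx i
  refine Real.sSup_le (forall_mem_image.2 fun P hP => ?_) ?_
  · calc |ux i P|
        ≤ semiS d α (domT d T) (ux i) * δ ^ α + 2 * supN d (domT d T) u / δ ^ 2 :=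
          abs_ux_le_of_isDerivs hα.1.le hder hfin i hP hδ
      _ ≤ ε * norm2S d α (domT d T) u ut ux uxx + 2 * ε ^ (-(2 / α)) * supN d (domT d T) u := by
          rw [hδα, mul_div_right_comm, hδ2, mul_comm _ ε]
          gcongr
          exact hε.1.le
  · have hu := supN_nonneg (d := d) (S := domT d T) (f := u)
    have hnorm := semiS_nonneg.trans hsemi
    have hε0 := hε.1
    positivity

/-- Interpolation inequality (ii): under the same hypotheses, for every `ε ∈ (0,1)`
and each `1 ≤ i ≤ d`, `‖u_{x_i}‖_C ≤ ε ‖u‖_{C^{2+α}_s} + C ε^{-m} ‖u‖_C`,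
with `m = m(d,α) > 0` and `C = C(T,R,d,α) > 0`. -/
theorem interpolation_first_deriv_sup (d : ℕ) (hd : 1 ≤ d) (α : ℝ)
    (hα : α ∈ Set.Ioo (0 : ℝ) 1) :
    ∃ m : ℝ, 0 < m ∧ ∀ T R : ℝ, 0 < T → 0 < R →
      ∃ C : ℝ, 0 < C ∧
        ∀ (u ut : ℝ × (Fin (d + 1) → ℝ) → ℝ)
          (ux : Fin (d + 1) → ℝ × (Fin (d + 1) → ℝ) → ℝ)
          (uxx : Fin (d + 1) → Fin (d + 1) → ℝ × (Fin (d + 1) → ℝ) → ℝ)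
          (x0 : Fin (d + 1) → ℝ),
          x0 (Fin.last d) = 0 →
          SuppBall d R x0 u →
          IsDerivs d T u ut ux uxx →
          FinNorm2 d α (domT d T) u ut ux uxx →
          ∀ ε ∈ Set.Ioo (0 : ℝ) 1, ∀ i : Fin (d + 1),
            supN d (domT d T) (ux i) ≤
              ε * norm2S d α (domT d T) u ut ux uxx +
                C * ε ^ (-m) * supN d (domT d T) u :=
  interpolation_first_deriv_sup_general d α hα
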